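/- Let pʳ, pᶜ, p̂ʳ, p̂ᶜ : Fin n → ℝ be strictly positive and α ∈ (0,1) with (1/(1+α)) p̂ʳ_i ≤ pʳ_i/(Σ_{i'} pʳ_{i'}) ≤ (1/(1-α)) p̂ʳ_i for all i, and similarly for the columns. Let k ≤ n, let S_r, S_c be k-element subsets realizing the k smallest entries of p̂ʳ, p̂ᶜ respectively, and let S_r*, S_c* be k-element subsets realizing the k smallest entries of pʳ, pᶜ respectively. Then for all (i,j): p̂ʳ_i/(Σ_{i'∈S_r} p̂ʳ_{i'}) + p̂ᶜ_j/(Σ_{j'∈S_c} p̂ᶜ_{j'}) ≤ ((1+α)²/(1-α)²) · (pʳ_i/(Σ_{i'∈S_r*} pʳ_{i'}) + pᶜ_j/(Σ_{j'∈S_c*} pᶜ_{j'})). -/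
import Mathlib

/-- The sum over a set realizing the k smallest entries is at most the sum
over any other set of the same cardinality. -/
lemma sum_min_le_sum {n : ℕ} (p : Fin n → ℝ) (A B : Finset (Fin n))
    (hcard : A.card = B.card)
    (hmin : ∀ i ∈ A, ∀ i' ∉ A, p i ≤ p i') :
    ∑ i ∈ A, p i ≤ ∑ i ∈ B, p i := by
  have hsplitA : ∑ i ∈ A, p i = (∑ i ∈ A \ B, p i) + ∑ i ∈ A ∩ B, p i := by
    rw [← Finset.sum_union (Finset.disjoint_sdiff_inter A B),
      Finset.sdiff_union_inter]
  have hsplitB : ∑ i ∈ B, p i = (∑ i ∈ B \ A, p i) + ∑ i ∈ A ∩ B, p i := by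
    rw [← Finset.sum_union, Finset.inter_comm, Finset.sdiff_union_inter]
    exact (Finset.disjoint_sdiff_inter B A).mono_right (by rw [Finset.inter_comm])
  have hcard' : (A \ B).card = (B \ A).card := by
    have h1 := Finset.card_sdiff_add_card_inter A B
    have h2 := Finset.card_sdiff_add_card_inter B A
    rw [Finset.inter_comm] at h2
    omega
  obtain e := Finset.equivOfCardEq hcard'
  have key : ∑ i ∈ A \ B, p i ≤ ∑ i ∈ B \ A, p i := by
    calc ∑ i ∈ A \ B, p i = ∑ x : (A \ B : Finset (Fin n)), p x :=
          (Finset.sum_coe_sort _ p).symm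
      _ ≤ ∑ x : (A \ B : Finset (Fin n)), p (e x) := by
          apply Finset.sum_le_sum
          intro x _
          have hx : (x : Fin n) ∈ A := (Finset.mem_sdiff.mp x.2).1
          have hy : ((e x : Fin n)) ∉ A := (Finset.mem_sdiff.mp (e x).2).2
          exact hmin x hx _ hy
      _ = ∑ y : (B \ A : Finset (Fin n)), p y := Equiv.sum_comp e (fun y => p y.1)
      _ = ∑ i ∈ B \ A, p i := Finset.sum_coe_sort _ p
  linarith

theorem stmt_14 {n : ℕ}
    (pr pc phr phc : Fin n → ℝ)
    (hpr : ∀ i, 0 < pr i) (hpc : ∀ j, 0 < pc j)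
    (hphr : ∀ i, 0 < phr i) (hphc : ∀ j, 0 < phc j)
    (α : ℝ) (hα0 : 0 < α) (hα1 : α < 1)
    (hrow : ∀ i, (1 / (1 + α)) * phr i ≤ pr i / (∑ i', pr i') ∧
      pr i / (∑ i', pr i') ≤ (1 / (1 - α)) * phr i)
    (hcol : ∀ j, (1 / (1 + α)) * phc j ≤ pc j / (∑ j', pc j') ∧
      pc j / (∑ j', pc j') ≤ (1 / (1 - α)) * phc j)
    (k : ℕ) (hk : k ≤ n)
    (Sr Sc Srstar Scstar : Finset (Fin n))
    (hSr : Sr.card = k) (hSc : Sc.card = k)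
    (hSrstar : Srstar.card = k) (hScstar : Scstar.card = k)
    (hSrmin : ∀ i ∈ Sr, ∀ i' ∉ Sr, phr i ≤ phr i')
    (hScmin : ∀ j ∈ Sc, ∀ j' ∉ Sc, phc j ≤ phc j')
    (hSrstarmin : ∀ i ∈ Srstar, ∀ i' ∉ Srstar, pr i ≤ pr i')
    (hScstarmin : ∀ j ∈ Scstar, ∀ j' ∉ Scstar, pc j ≤ pc j') :
    ∀ i j, phr i / (∑ i' ∈ Sr, phr i') + phc j / (∑ j' ∈ Sc, phc j')
      ≤ ((1 + α) ^ 2 / (1 - α) ^ 2) *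
        (pr i / (∑ i' ∈ Srstar, pr i') + pc j / (∑ j' ∈ Scstar, pc j')) := by
  intro i j
  have h1α : (0:ℝ) < 1 - α := by linarith
  have h1α' : (0:ℝ) < 1 + α := by linarith
  rcases Nat.eq_zero_or_pos k with hk0 | hkpos
  · subst hk0
    rw [Finset.card_eq_zero] at hSr hSc hSrstar hScstar
    subst hSr; subst hSc; subst hSrstar; subst hScstar
    simp
  -- generic one-sided bound
  have main : ∀ (p ph : Fin n → ℝ), (∀ i, 0 < p i) → (∀ i, 0 < ph i) →
      (∀ i, (1 / (1 + α)) * ph i ≤ p i / (∑ i', p i') ∧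
        p i / (∑ i', p i') ≤ (1 / (1 - α)) * ph i) →
      ∀ (A B : Finset (Fin n)), A.card = k → B.card = k →
      (∀ i ∈ B, ∀ i' ∉ B, p i ≤ p i') →
      ∀ i, ph i / (∑ i' ∈ A, ph i') ≤
        ((1 + α) / (1 - α)) * (p i / (∑ i' ∈ B, p i')) := by
    intro p ph hp hph hs A B hA hB hBmin i
    set P := ∑ i', p i' with hP
    have hPpos : 0 < P := Finset.sum_pos (fun i _ => hp i) ⟨⟨0, by omega⟩, Finset.mem_univ _⟩
    have hBne : B.Nonempty := Finset.card_pos.mp (by omega)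
    have hAne : A.Nonempty := Finset.card_pos.mp (by omega)
    have hSBpos : 0 < ∑ i' ∈ B, p i' := Finset.sum_pos (fun i _ => hp i) hBne
    -- upper: ph i ≤ (1+α) * (p i / P)
    have hup : ph i ≤ (1 + α) * (p i / P) := by
      have := (hs i).1
      rw [div_mul_eq_mul_div, div_le_iff₀ h1α', one_mul] at this
      linarith [this]
    -- lower: for each i', (1-α) * (p i' / P) ≤ ph i'
    have hlo : ∀ i', (1 - α) * (p i' / P) ≤ ph i' := by
      intro i'
      have := (hs i').2
      rw [div_mul_eq_mul_div, le_div_iff₀ h1α, one_mul] at this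
      linarith [this]
    have hden : (1 - α) * ((∑ i' ∈ B, p i') / P) ≤ ∑ i' ∈ A, ph i' := by
      have step1 : ∑ i' ∈ B, p i' ≤ ∑ i' ∈ A, p i' :=
        sum_min_le_sum p B A (by omega) hBmin
      have step2 : ∑ i' ∈ A, (1 - α) * (p i' / P) ≤ ∑ i' ∈ A, ph i' :=
        Finset.sum_le_sum (fun i' _ => hlo i')
      have : (1 - α) * ((∑ i' ∈ A, p i') / P) = ∑ i' ∈ A, (1 - α) * (p i' / P) := by
        rw [Finset.sum_div, Finset.mul_sum]
      calc (1 - α) * ((∑ i' ∈ B, p i') / P)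
          ≤ (1 - α) * ((∑ i' ∈ A, p i') / P) := by gcongr
        _ = ∑ i' ∈ A, (1 - α) * (p i' / P) := this
        _ ≤ ∑ i' ∈ A, ph i' := step2
    have hdenpos : 0 < (1 - α) * ((∑ i' ∈ B, p i') / P) :=
      mul_pos h1α (div_pos hSBpos hPpos)
    calc ph i / ∑ i' ∈ A, ph i'
        ≤ ((1 + α) * (p i / P)) / ((1 - α) * ((∑ i' ∈ B, p i') / P)) := by
          exact div_le_div₀ (mul_nonneg h1α'.le (div_pos (hp i) hPpos).le) hup hdenpos hden
      _ = ((1 + α) / (1 - α)) * (p i / ∑ i' ∈ B, p i') := by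
          field_simp
  have hr := main pr phr hpr hphr hrow Sr Srstar hSr hSrstar hSrstarmin i
  have hc := main pc phc hpc hphc hcol Sc Scstar hSc hScstar hScstarmin j
  have hprpos : 0 < pr i / ∑ i' ∈ Srstar, pr i' := by
    apply div_pos (hpr i)
    exact Finset.sum_pos (fun i _ => hpr i) (Finset.card_pos.mp (by omega))
  have hpcpos : 0 < pc j / ∑ j' ∈ Scstar, pc j' := by
    apply div_pos (hpc j)
    exact Finset.sum_pos (fun j _ => hpc j) (Finset.card_pos.mp (by omega))
  have hfac : (1 + α) / (1 - α) ≤ (1 + α) ^ 2 / (1 - α) ^ 2 := by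
    rw [div_le_div_iff₀ h1α (by positivity)]
    nlinarith [mul_pos (mul_pos h1α' h1α) hα0]
  calc phr i / (∑ i' ∈ Sr, phr i') + phc j / (∑ j' ∈ Sc, phc j')
      ≤ ((1 + α) / (1 - α)) * (pr i / (∑ i' ∈ Srstar, pr i') + pc j / (∑ j' ∈ Scstar, pc j')) := by
        rw [mul_add]; linarith
    _ ≤ ((1 + α) ^ 2 / (1 - α) ^ 2) * (pr i / (∑ i' ∈ Srstar, pr i') + pc j / (∑ j' ∈ Scstar, pc j')) := by
        apply mul_le_mul_of_nonneg_right hfac (by linarith)
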